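/- Let T: 𝕋 → 𝕋 be continuous with finite fibers, X ⊂ 𝕋 an infinite rotational proper subset with 0 ∉ X, α = inf X, β = sup X in [0,1). Then α < T(β) ≤ T(α) < β. -/

import Mathlib

/-!
Let `A`, `B` be the points of `X` with coordinates `α`, `β`; every other point of `X` lies
strictly between them. An infinite minimal set has no periodic and no isolated points, and it
lies in the closure of its image. If `T A ≠ T B`, preservation of the cyclic order puts every
image `T x ∉ {T A, T B}` on the arc from `T A` to `T B`. So if `T A` had a smaller coordinate
than `T B`, then `T X`, hence `X`, would lie in the coordinate interval `[T A, T B]`, forcing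
`T A = A`; if `T B = A`, then `X \ {A}` lies in `[T A, β]` and `A` is isolated; symmetrically,
`T A = B` would make `B` isolated.
-/

open Set Filter MeasureTheory

noncomputable def rep (z : UnitAddCircle) : ℝ := (AddCircle.equivIco 1 0 z : ℝ)

def MinimalOn (T : UnitAddCircle → UnitAddCircle) (X : Set UnitAddCircle) : Prop :=
  ∀ x ∈ X, ∀ y ∈ X, y ∈ closure {z : UnitAddCircle | ∃ n : ℕ, T^[n] x = z}

def PreservesCyclicOrder (T : UnitAddCircle → UnitAddCircle) (X : Set UnitAddCircle) : Prop :=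
  ∀ p ∈ X, ∀ q ∈ X, ∀ r ∈ X,
    T p ≠ T q → T q ≠ T r → T r ≠ T p →
    sbtw p q r → sbtw (T p) (T q) (T r)

def IsRotational (T : UnitAddCircle → UnitAddCircle) (X : Set UnitAddCircle) : Prop :=
  IsClosed X ∧ Set.MapsTo T X X ∧ MinimalOn T X ∧ PreservesCyclicOrder T X

lemma coe_rep (z : UnitAddCircle) : ((rep z : ℝ) : UnitAddCircle) = z :=
  (AddCircle.equivIco 1 0).symm_apply_apply z

lemma rep_mem_Ico (z : UnitAddCircle) : rep z ∈ Ico (0 : ℝ) 1 := by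
  simpa [rep] using (AddCircle.equivIco 1 0 z).2

lemma rep_coe {r : ℝ} (hr : r ∈ Ico (0 : ℝ) 1) : rep (r : UnitAddCircle) = r := by
  change toIcoMod one_pos 0 r = r
  rw [toIcoMod_eq_self]
  simpa using hr

lemma rep_injective : Function.Injective rep :=
  Function.LeftInverse.injective coe_rep

lemma mem_image_rep {X : Set UnitAddCircle} {r : ℝ} :
    r ∈ rep '' X ↔ r ∈ Ico (0 : ℝ) 1 ∧ (r : UnitAddCircle) ∈ X := by
  constructor
  · rintro ⟨z, hz, rfl⟩
    exact ⟨rep_mem_Ico z, (coe_rep z).symm ▸ hz⟩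
  · rintro ⟨hr, hrX⟩
    exact ⟨r, hrX, rep_coe hr⟩

lemma isClosed_image_rep {X : Set UnitAddCircle} (hX : IsClosed X)
    (h0 : (0 : UnitAddCircle) ∉ X) : IsClosed (rep '' X) := by
  have : rep '' X = Icc 0 1 ∩ (↑) ⁻¹' X := by
    ext r
    rw [mem_image_rep, mem_inter_iff, mem_preimage]
    refine ⟨fun ⟨hr, hrX⟩ => ⟨Ico_subset_Icc_self hr, hrX⟩,
      fun ⟨hr, hrX⟩ => ⟨⟨hr.1, ?_⟩, hrX⟩⟩
    refine hr.2.lt_of_ne ?_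
    rintro rfl
    rw [show ((1 : ℝ) : UnitAddCircle) = 0 from AddCircle.coe_period 1] at hrX
    exact h0 hrX
  rw [this]
  exact isClosed_Icc.inter (hX.preimage (AddCircle.continuous_mk' 1))

lemma isClosed_setOf_rep_mem_Icc {s t : ℝ} (hs : 0 ≤ s) (ht : t < 1) :
    IsClosed {z : UnitAddCircle | rep z ∈ Icc s t} := by
  have : {z : UnitAddCircle | rep z ∈ Icc s t} = (↑) '' Icc s t := by
    ext z
    refine ⟨fun hz => ⟨rep z, hz, coe_rep z⟩, ?_⟩
    rintro ⟨r, hr, rfl⟩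
    show rep _ ∈ Icc s t
    rwa [rep_coe ⟨hs.trans hr.1, hr.2.trans_lt ht⟩]
  rw [this]
  exact (isCompact_Icc.image (AddCircle.continuous_mk' 1)).isClosed

lemma sbtw_coe_iff {a b c : ℝ} (ha : a ∈ Ico (0 : ℝ) 1) (hb : b ∈ Ico (0 : ℝ) 1)
    (hc : c ∈ Ico (0 : ℝ) 1) :
    sbtw (a : UnitAddCircle) b c ↔ a < b ∧ b < c ∨ b < c ∧ c < a ∨ c < a ∧ a < b := by
  have toIco {x y : ℝ} (hx : x ∈ Ico (0 : ℝ) 1) (hy : y ∈ Ico (0 : ℝ) 1) :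
      toIcoMod one_pos x y = if x ≤ y then y else y + 1 := by
    split_ifs with h
    · exact (toIcoMod_eq_self _).2 ⟨h, by linarith [hx.1, hy.2]⟩
    · rw [← toIcoMod_add_right, toIcoMod_eq_self]; constructor <;> linarith [hx.2, hy.1]
  have toIoc {x y : ℝ} (hx : x ∈ Ico (0 : ℝ) 1) (hy : y ∈ Ico (0 : ℝ) 1) :
      toIocMod one_pos x y = if x < y then y else y + 1 := by
    split_ifs with h
    · exact (toIocMod_eq_self _).2 ⟨h, by linarith [hx.1, hy.2]⟩
    · rw [← toIocMod_add_right, toIocMod_eq_self]; constructor <;> linarith [hx.2, hy.1]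
  rw [sbtw_iff_btw_not_btw, QuotientAddGroup.btw_coe_iff, QuotientAddGroup.btw_coe_iff,
    toIco ha hb, toIoc ha hc, toIco hc hb, toIoc hc ha]
  split_ifs <;> grind

lemma sbtw_iff_rep {a b c : UnitAddCircle} :
    sbtw a b c ↔ rep a < rep b ∧ rep b < rep c ∨ rep b < rep c ∧ rep c < rep a ∨
      rep c < rep a ∧ rep a < rep b := by
  conv_lhs => rw [← coe_rep a, ← coe_rep b, ← coe_rep c]
  exact sbtw_coe_iff (rep_mem_Ico a) (rep_mem_Ico b) (rep_mem_Ico c)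

namespace MinimalOn

variable {T : UnitAddCircle → UnitAddCircle} {X : Set UnitAddCircle}

lemma finite_of_isPeriodicPt (hmin : MinimalOn T X) {x : UnitAddCircle} (hx : x ∈ X) {n : ℕ}
    (hn : 0 < n) (hper : Function.IsPeriodicPt T n x) : X.Finite := by
  have horbit : (range fun m => T^[m] x).Finite := by
    refine ((finite_Iio n).image fun m => T^[m] x).subset ?_
    rintro _ ⟨m, rfl⟩
    exact ⟨m % n, Nat.mod_lt m hn, hper.iterate_mod_apply m⟩
  exact horbit.subset fun y hy => horbit.isClosed.closure_subset (hmin x hx y hy)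

lemma apply_ne_self (hmin : MinimalOn T X) (hinf : X.Infinite) {x : UnitAddCircle} (hx : x ∈ X) :
    T x ≠ x := fun h =>
  hinf (hmin.finite_of_isPeriodicPt hx one_pos (Function.IsFixedPt.isPeriodicPt h 1))

lemma mem_closure_diff_singleton (hmin : MinimalOn T X) (hmaps : MapsTo T X X)
    (hinf : X.Infinite) {x : UnitAddCircle} (hx : x ∈ X) : x ∈ closure (X \ {x}) := by
  by_contra hiso
  obtain ⟨n, hn⟩ : ∃ n, T^[n] (T x) = x := by
    by_contra! hnot
    refine hiso (closure_mono ?_ (hmin (T x) (hmaps hx) x hx))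
    rintro _ ⟨n, rfl⟩
    exact ⟨hmaps.iterate n (hmaps hx), hnot n⟩
  refine hinf (hmin.finite_of_isPeriodicPt hx n.succ_pos ?_)
  rwa [Function.IsPeriodicPt, Function.IsFixedPt, Function.iterate_succ_apply]

lemma subset_of_mapsTo (hmin : MinimalOn T X) (hmaps : MapsTo T X X) (hne : X.Nonempty)
    {F : Set UnitAddCircle} (hF : IsClosed F) (hTF : MapsTo T X F) : X ⊆ F := by
  obtain ⟨x, hx⟩ := hne
  intro y hy
  refine hF.closure_subset (closure_mono ?_ (hmin (T x) (hmaps hx) y hy))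
  rintro _ ⟨n, rfl⟩
  rw [← Function.iterate_succ_apply, Function.iterate_succ_apply']
  exact hTF (hmaps.iterate n hx)

lemma not_mapsTo_insert (hmin : MinimalOn T X) (hmaps : MapsTo T X X) (hinf : X.Infinite)
    {x : UnitAddCircle} (hx : x ∈ X) {F : Set UnitAddCircle} (hF : IsClosed F) (hxF : x ∉ F) :
    ¬MapsTo T X (insert x F) := fun hTF => by
  have hsub := hmin.subset_of_mapsTo hmaps hinf.nonempty
    (by rw [insert_eq]; exact isClosed_singleton.union hF) hTF
  refine hxF (hF.closure_subset (closure_mono ?_ (hmin.mem_closure_diff_singleton hmaps hinf hx)))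
  exact fun y ⟨hy, hyx⟩ => (hsub hy).resolve_left hyx

end MinimalOn

section Endpoints

variable {T : UnitAddCircle → UnitAddCircle} {X : Set UnitAddCircle} {A B : UnitAddCircle}

lemma apply_eq_or_sbtw (hcyc : PreservesCyclicOrder T X) (hA : A ∈ X) (hB : B ∈ X)
    (hbd : ∀ z ∈ X, rep A ≤ rep z ∧ rep z ≤ rep B) (hAB : T A ≠ T B) {x : UnitAddCircle}
    (hx : x ∈ X) : T x = T A ∨ T x = T B ∨ sbtw (T A) (T x) (T B) := by
  by_cases hxA : T x = T A
  · exact Or.inl hxA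
  by_cases hxB : T x = T B
  · exact Or.inr (Or.inl hxB)
  refine Or.inr (Or.inr (hcyc A hA x hx B hB (Ne.symm hxA) hxB (Ne.symm hAB) ?_))
  have hAx : rep A < rep x := (hbd x hx).1.lt_of_ne fun h => hxA (by rw [rep_injective h])
  have hxB' : rep x < rep B := (hbd x hx).2.lt_of_ne fun h => hxB (by rw [rep_injective h])
  exact sbtw_iff_rep.2 (Or.inl ⟨hAx, hxB'⟩)

lemma rep_apply_right_le_rep_apply_left (hmin : MinimalOn T X) (hmaps : MapsTo T X X)
    (hcyc : PreservesCyclicOrder T X) (hinf : X.Infinite) (hA : A ∈ X) (hB : B ∈ X)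
    (hbd : ∀ z ∈ X, rep A ≤ rep z ∧ rep z ≤ rep B) : rep (T B) ≤ rep (T A) := by
  by_contra! hlt
  have hAB : T A ≠ T B := fun h => hlt.ne (congrArg rep h)
  have hTX : MapsTo T X {z | rep z ∈ Icc (rep (T A)) (rep (T B))} := by
    intro x hx
    rcases apply_eq_or_sbtw hcyc hA hB hbd hAB hx with h | h | h
    · exact ⟨h ▸ le_rfl, h ▸ hlt.le⟩
    · exact ⟨h ▸ hlt.le, h ▸ le_rfl⟩
    · have := hbd _ (hmaps hx)
      rcases sbtw_iff_rep.1 h with h | h | h <;> exact ⟨by linarith, by linarith⟩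
  have hA' := hmin.subset_of_mapsTo hmaps ⟨A, hA⟩
    (isClosed_setOf_rep_mem_Icc (rep_mem_Ico _).1 (rep_mem_Ico _).2) hTX hA
  exact hmin.apply_ne_self hinf hA (rep_injective (le_antisymm hA'.1 (hbd _ (hmaps hA)).1))

lemma rep_left_lt_rep_apply_right (hmin : MinimalOn T X) (hmaps : MapsTo T X X)
    (hcyc : PreservesCyclicOrder T X) (hinf : X.Infinite) (hA : A ∈ X) (hB : B ∈ X)
    (hbd : ∀ z ∈ X, rep A ≤ rep z ∧ rep z ≤ rep B) : rep A < rep (T B) := by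
  refine (hbd _ (hmaps hB)).1.lt_of_ne fun heq => ?_
  have hTB : T B = A := rep_injective heq.symm
  have hTA : rep A < rep (T A) := (hbd _ (hmaps hA)).1.lt_of_ne fun h =>
    hmin.apply_ne_self hinf hA (rep_injective h).symm
  have hAB : T A ≠ T B := by rw [hTB]; exact hmin.apply_ne_self hinf hA
  refine hmin.not_mapsTo_insert hmaps hinf hA
    (isClosed_setOf_rep_mem_Icc (rep_mem_Ico (T A)).1 (rep_mem_Ico B).2)
    (fun h => (h.1.trans_lt hTA).false) fun x hx => ?_
  rcases apply_eq_or_sbtw hcyc hA hB hbd hAB hx with h | h | h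
  · exact Or.inr ⟨h ▸ le_rfl, h ▸ (hbd _ (hmaps hA)).2⟩
  · exact Or.inl (h.trans hTB)
  · have := hbd _ (hmaps hx)
    rw [hTB] at h
    rcases sbtw_iff_rep.1 h with h | h | h <;> exact Or.inr ⟨by linarith, by linarith⟩

lemma rep_apply_left_lt_rep_right (hmin : MinimalOn T X) (hmaps : MapsTo T X X)
    (hcyc : PreservesCyclicOrder T X) (hinf : X.Infinite) (hA : A ∈ X) (hB : B ∈ X)
    (hbd : ∀ z ∈ X, rep A ≤ rep z ∧ rep z ≤ rep B) : rep (T A) < rep B := by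
  refine (hbd _ (hmaps hA)).2.lt_of_ne fun heq => ?_
  have hTA : T A = B := rep_injective heq
  have hTB : rep (T B) < rep B := (hbd _ (hmaps hB)).2.lt_of_ne fun h =>
    hmin.apply_ne_self hinf hB (rep_injective h)
  have hAB : T A ≠ T B := by rw [hTA]; exact (hmin.apply_ne_self hinf hB).symm
  refine hmin.not_mapsTo_insert hmaps hinf hB
    (isClosed_setOf_rep_mem_Icc (rep_mem_Ico A).1 (rep_mem_Ico (T B)).2)
    (fun h => (h.2.trans_lt hTB).false) fun x hx => ?_
  rcases apply_eq_or_sbtw hcyc hA hB hbd hAB hx with h | h | h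
  · exact Or.inl (h.trans hTA)
  · exact Or.inr ⟨h ▸ (hbd _ (hmaps hB)).1, h ▸ le_rfl⟩
  · have := hbd _ (hmaps hx)
    rw [hTA] at h
    rcases sbtw_iff_rep.1 h with h | h | h <;> exact Or.inr ⟨by linarith, by linarith⟩

end Endpoints

theorem endpoint_images_general
    (T : UnitAddCircle → UnitAddCircle)
    (X : Set UnitAddCircle) (hrot : IsRotational T X)
    (hinf : X.Infinite)
    (h0 : (0 : UnitAddCircle) ∉ X)
    (Xr : Set ℝ)
    (hXr : Xr = {r : ℝ | r ∈ Set.Ico (0:ℝ) 1 ∧ ((r : ℝ) : UnitAddCircle) ∈ X})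
    (α β : ℝ) (hα : α = sInf Xr) (hβ : β = sSup Xr) :
    α < rep (T ((β : ℝ) : UnitAddCircle)) ∧
      rep (T ((β : ℝ) : UnitAddCircle)) ≤ rep (T ((α : ℝ) : UnitAddCircle)) ∧
      rep (T ((α : ℝ) : UnitAddCircle)) < β := by
  obtain ⟨hclosed, hmaps, hmin, hcyc⟩ := hrot
  obtain rfl : Xr = rep '' X := by ext r; rw [hXr, mem_image_rep]; rfl
  have hXr_closed := isClosed_image_rep hclosed h0
  have hXr_ne := hinf.nonempty.image rep
  have hXr_sub : rep '' X ⊆ Ico 0 1 := image_subset_iff.2 fun z _ => rep_mem_Ico z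
  obtain ⟨⟨A, hA, hAα⟩, hAlow⟩ :=
    hXr_closed.isLeast_csInf hXr_ne ⟨0, fun r hr => (hXr_sub hr).1⟩
  obtain ⟨⟨B, hB, hBβ⟩, hBup⟩ :=
    hXr_closed.isGreatest_csSup hXr_ne ⟨1, fun r hr => (hXr_sub hr).2.le⟩
  subst hα hβ
  have hbd : ∀ z ∈ X, rep A ≤ rep z ∧ rep z ≤ rep B := fun z hz =>
    ⟨hAα ▸ hAlow (mem_image_of_mem rep hz), hBβ ▸ hBup (mem_image_of_mem rep hz)⟩
  rw [← hAα, ← hBβ, coe_rep, coe_rep]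
  exact ⟨rep_left_lt_rep_apply_right hmin hmaps hcyc hinf hA hB hbd,
    rep_apply_right_le_rep_apply_left hmin hmaps hcyc hinf hA hB hbd,
    rep_apply_left_lt_rep_right hmin hmaps hcyc hinf hA hB hbd⟩

theorem endpoint_images
    (T : UnitAddCircle → UnitAddCircle) (hT : Continuous T)
    (hfib : ∀ y : UnitAddCircle, (T ⁻¹' {y}).Finite)
    (X : Set UnitAddCircle) (hrot : IsRotational T X)
    (hinf : X.Infinite) (hproper : X ≠ Set.univ)
    (h0 : (0 : UnitAddCircle) ∉ X)
    (Xr : Set ℝ)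
    (hXr : Xr = {r : ℝ | r ∈ Set.Ico (0:ℝ) 1 ∧ ((r : ℝ) : UnitAddCircle) ∈ X})
    (α β : ℝ) (hα : α = sInf Xr) (hβ : β = sSup Xr) :
    α < rep (T ((β : ℝ) : UnitAddCircle)) ∧
      rep (T ((β : ℝ) : UnitAddCircle)) ≤ rep (T ((α : ℝ) : UnitAddCircle)) ∧
      rep (T ((α : ℝ) : UnitAddCircle)) < β :=
  endpoint_images_general T X hrot hinf h0 Xr hXr α β hα hβ
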